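/- If the term xM₁…Mₖ (a variable applied to a stack of terms) is strongly normalising and every term in the stack N₁,…,Nₘ is strongly normalising, then xM₁…MₖN₁…Nₘ is strongly normalising. -/
import Mathlib


/-- λμ-terms: variables, abstraction, application, and μ-abstraction
    `mu a b M` represents μα.[β]M (a = α, b = β). -/
inductive Trm : Type
  | var : ℕ → Trm
  | lam : ℕ → Trm → Trm
  | app : Trm → Trm → Trm
  | mu  : ℕ → ℕ → Trm → Trm
deriving DecidableEq

/-- Term substitution M[N/x] (Barendregt convention: no capture). -/
def subst : Trm → ℕ → Trm → Trm
  | .var y, x, N => if y = x then N else .var y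
  | .lam y M, x, N => .lam y (subst M x N)
  | .app M P, x, N => .app (subst M x N) (subst P x N)
  | .mu a b M, x, N => .mu a b (subst M x N)

/-- Structural substitution M{α ⇐ N}: every named subterm [α]P becomes [α]PN. -/
def ssub : Trm → ℕ → Trm → Trm
  | .var y, _, _ => .var y
  | .lam y M, a, N => .lam y (ssub M a N)
  | .app M P, a, N => .app (ssub M a N) (ssub P a N)
  | .mu b c M, a, N =>
      .mu b c (if c = a then .app (ssub M a N) N else ssub M a N)

/-- Iterated structural substitution M{α ⇐ N₁}…{α ⇐ Nₘ}. -/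
def ssubs (a : ℕ) (M : Trm) (Ns : List Trm) : Trm :=
  Ns.foldl (fun T N => ssub T a N) M

/-- Application of a term to a stack of terms: M L₁ … Lₖ. -/
def appList (M : Trm) (L : List Trm) : Trm := L.foldl .app M

/-- One-step reduction: logical (β) and structural (μ) rules, compatible closure. -/
inductive Red : Trm → Trm → Prop
  | beta (x : ℕ) (M N : Trm) : Red (.app (.lam x M) N) (subst M x N)
  | mu (a b : ℕ) (M N : Trm) : Red (.app (.mu a b M) N) (ssub (.mu a b M) a N)
  | appL {M M' : Trm} (N : Trm) : Red M M' → Red (.app M N) (.app M' N)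
  | appR (M : Trm) {N N' : Trm} : Red N N' → Red (.app M N) (.app M N')
  | lam (x : ℕ) {M M' : Trm} : Red M M' → Red (.lam x M) (.lam x M')
  | muC (a b : ℕ) {M M' : Trm} : Red M M' → Red (.mu a b M) (.mu a b M')

/-- Strong normalisation: no infinite reduction sequence from M. -/
def SN (M : Trm) : Prop := Acc (fun p q => Red q p) M

/-- Stacks of strongly normalising terms. -/
def SNs (L : List Trm) : Prop := ∀ P ∈ L, SN P

mutual
/-- Term types δ ::= ν | ω→ν | κ→ν | δ∧δ. -/
inductive TyD : Type
  | nu : TyD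
  | arrOmega : TyD
  | arr : TyC → TyD
  | inter : TyD → TyD → TyD
/-- Continuation-stack types κ ::= δ×ω | δ×κ | κ∧κ. -/
inductive TyC : Type
  | prodOmega : TyD → TyC
  | prod : TyD → TyC → TyC
  | inter : TyC → TyC → TyC
end

mutual
/-- The subtyping preorder on term types. -/
inductive LeD : TyD → TyD → Prop
  | refl (d) : LeD d d
  | trans {d1 d2 d3} : LeD d1 d2 → LeD d2 d3 → LeD d1 d3
  | interL (d1 d2) : LeD (.inter d1 d2) d1
  | interR (d1 d2) : LeD (.inter d1 d2) d2
  | glb {d d1 d2} : LeD d d1 → LeD d d2 → LeD d (.inter d1 d2)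
  | nuOmega : LeD .nu .arrOmega
  | omegaNu : LeD .arrOmega .nu
  | arr {k1 k2} : LeC k2 k1 → LeD (.arr k1) (.arr k2)
/-- The subtyping preorder on continuation-stack types. -/
inductive LeC : TyC → TyC → Prop
  | refl (k) : LeC k k
  | trans {k1 k2 k3} : LeC k1 k2 → LeC k2 k3 → LeC k1 k3
  | interL (k1 k2) : LeC (.inter k1 k2) k1
  | interR (k1 k2) : LeC (.inter k1 k2) k2
  | glb {k k1 k2} : LeC k k1 → LeC k k2 → LeC k (.inter k1 k2)
  | drop (d1 d2) : LeC (.prod d1 (.prodOmega d2)) (.prodOmega d1)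
  | distOmega (d1 d2 k) :
      LeC (.inter (.prodOmega d1) (.prod d2 k)) (.prod (.inter d1 d2) k)
  | dist (d1 d2 k1 k2) :
      LeC (.inter (.prod d1 k1) (.prod d2 k2))
          (.prod (.inter d1 d2) (.inter k1 k2))
  | monoOmega {d1 d2} : LeD d1 d2 → LeC (.prodOmega d1) (.prodOmega d2)
  | mono {d1 d2 k1 k2} : LeD d1 d2 → LeC k1 k2 → LeC (.prod d1 k1) (.prod d2 k2)
end

mutual
/-- Interpretation of term types as sets of terms. -/
def semD : TyD → Set Trm
  | .nu => {M | SN M}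
  | .arrOmega => {M | SN M}
  | .arr k => {M | ∀ L ∈ semC k, SN (appList M L)}
  | .inter d1 d2 => semD d1 ∩ semD d2
/-- Interpretation of continuation-stack types as sets of stacks. -/
def semC : TyC → Set (List Trm)
  | .prodOmega d => {l | ∃ N L, l = N :: L ∧ N ∈ semD d ∧ SNs L}
  | .prod d k => {l | ∃ N L, l = N :: L ∧ N ∈ semD d ∧ L ∈ semC k}
  | .inter k1 k2 => semC k1 ∩ semC k2
end

/-- Minimal length ‖κ‖ of stacks in ⟦κ⟧. -/
def lenC : TyC → ℕ
  | .prodOmega _ => 1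
  | .prod _ k => 1 + lenC k
  | .inter k1 k2 => max (lenC k1) (lenC k2)

abbrev Ctx := ℕ → Option TyD
abbrev NCtx := ℕ → Option TyC

/-- The intersection type assignment system for λμ.
    In the (abs)/(app) rules κ may be a continuation type or ω, hence two forms. -/
inductive Typ : Ctx → Trm → TyD → NCtx → Prop
  | ax {Γ : Ctx} {x δ} (Δ : NCtx) : Γ x = some δ → Typ Γ (.var x) δ Δ
  | abs {Γ x δ κ M Δ} : Typ (Function.update Γ x (some δ)) M (.arr κ) Δ →
      Typ Γ (.lam x M) (.arr (.prod δ κ)) Δ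
  | absOmega {Γ x δ M Δ} : Typ (Function.update Γ x (some δ)) M .arrOmega Δ →
      Typ Γ (.lam x M) (.arr (.prodOmega δ)) Δ
  | app {Γ M N δ κ Δ} : Typ Γ M (.arr (.prod δ κ)) Δ → Typ Γ N δ Δ →
      Typ Γ (.app M N) (.arr κ) Δ
  | appOmega {Γ M N δ Δ} : Typ Γ M (.arr (.prodOmega δ)) Δ → Typ Γ N δ Δ →
      Typ Γ (.app M N) .arrOmega Δ
  | muNe {Γ M a b κ κ' Δ} : a ≠ b →
      Typ Γ M (.arr κ') (Function.update (Function.update Δ b (some κ')) a (some κ)) →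
      Typ Γ (.mu a b M) (.arr κ) (Function.update Δ b (some κ'))
  | muEq {Γ M a κ Δ} : Typ Γ M (.arr κ) (Function.update Δ a (some κ)) →
      Typ Γ (.mu a a M) (.arr κ) Δ
  | sub {Γ M δ δ' Δ} : Typ Γ M δ Δ → LeD δ δ' → Typ Γ M δ' Δ
  | inter {Γ M δ1 δ2 Δ} : Typ Γ M δ1 Δ → Typ Γ M δ2 Δ → Typ Γ M (.inter δ1 δ2) Δ

/-- Free variables. -/
def fv : Trm → Set ℕ
  | .var x => {x}
  | .lam x M => fv M \ {x}
  | .app M N => fv M ∪ fv N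
  | .mu _ _ M => fv M

/-- Free names. -/
def fn : Trm → Set ℕ
  | .var _ => ∅
  | .lam _ M => fn M
  | .app M N => fn M ∪ fn N
  | .mu a b M => (fn M ∪ {b}) \ {a}

/-- Bound variables. -/
def bv : Trm → Set ℕ
  | .var _ => ∅
  | .lam x M => {x} ∪ bv M
  | .app M N => bv M ∪ bv N
  | .mu _ _ M => bv M

/-- Bound names. -/
def bn : Trm → Set ℕ
  | .var _ => ∅
  | .lam _ M => bn M
  | .app M N => bn M ∪ bn N
  | .mu a _ M => {a} ∪ bn M

/-- Γ' ≤ Γ on variable contexts. -/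
def CtxLe (Γ' Γ : Ctx) : Prop :=
  ∀ x δ, Γ x = some δ → ∃ δ', Γ' x = some δ' ∧ LeD δ' δ

/-- Δ' ≤ Δ on name contexts. -/
def NCtxLe (Δ' Δ : NCtx) : Prop :=
  ∀ a κ, Δ a = some κ → ∃ κ', Δ' a = some κ' ∧ LeC κ' κ

/-- Application of a parallel substitution (ξv on variables, ξn on names;
    default ξv x = var x / ξn a = [] encodes "not in the domain"). -/
def psub (ξv : ℕ → Trm) (ξn : ℕ → List Trm) : Trm → Trm
  | .var x => ξv x
  | .lam x M => .lam x (psub ξv ξn M)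
  | .app M N => .app (psub ξv ξn M) (psub ξv ξn N)
  | .mu a b M => .mu a b (appList (psub ξv ξn M) (ξn b))

/-- Normal forms: N ::= x N₁…Nₖ | λx.N | μα.[β]N. -/
inductive Nf : Trm → Prop
  | varApp (x : ℕ) (Ns : List Trm) : (∀ N ∈ Ns, Nf N) → Nf (appList (.var x) Ns)
  | lam (x : ℕ) {M} : Nf M → Nf (.lam x M)
  | mu (a b : ℕ) {M} : Nf M → Nf (.mu a b M)

/-- Simple types (logical formulas) A ::= φ | A → B. -/
inductive SType : Type
  | base : ℕ → SType
  | arrow : SType → SType → SType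

abbrev SCtx := ℕ → Option SType

/-- Parigot's simply-typed λμ-calculus (propositional fragment). -/
inductive STyp : SCtx → Trm → SType → SCtx → Prop
  | ax {Γ : SCtx} {x A} (Δ : SCtx) : Γ x = some A → STyp Γ (.var x) A Δ
  | arrI {Γ x A B M Δ} : STyp (Function.update Γ x (some A)) M B Δ →
      STyp Γ (.lam x M) (.arrow A B) Δ
  | arrE {Γ M N A B Δ} : STyp Γ M (.arrow A B) Δ → STyp Γ N A Δ →
      STyp Γ (.app M N) B Δ
  | mu1 {Γ M a A Δ} : STyp Γ M A (Function.update Δ a (some A)) →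
      STyp Γ (.mu a a M) A Δ
  | mu2 {Γ M a b A B Δ} : a ≠ b →
      STyp Γ M B (Function.update (Function.update Δ b (some B)) a (some A)) →
      STyp Γ (.mu a b M) A (Function.update Δ b (some B))

/-- Translation of formulas to continuation-stack types. -/
def transC : SType → TyC
  | .base _ => .prodOmega .nu
  | .arrow A B => .prod (.arr (transC A)) (transC B)

/-- Translation of formulas to term types. -/
def transD (A : SType) : TyD := .arr (transC A)

/-- One-step reduction of one element of a list. -/
def LR (L' L : List Trm) : Prop :=
  ∃ pre a a' suf, L = pre ++ a :: suf ∧ L' = pre ++ a' :: suf ∧ Red a a'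

lemma appList_append (M : Trm) (L1 L2 : List Trm) :
    appList M (L1 ++ L2) = appList (appList M L1) L2 := by
  simp [appList, List.foldl_append]

lemma red_appList {M M' : Trm} (L : List Trm) (h : Red M M') :
    Red (appList M L) (appList M' L) := by
  induction L generalizing M M' with
  | nil => exact h
  | cons P L ih => exact ih (Red.appL P h)

lemma no_red_var {x : ℕ} {T : Trm} (h : Red (.var x) T) : False := by
  cases h

lemma appList_var_shape (x : ℕ) (Ms : List Trm) :
    (∃ y, appList (Trm.var x) Ms = .var y) ∨
    (∃ A B, appList (Trm.var x) Ms = .app A B) := by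
  induction Ms using List.reverseRecOn with
  | nil => exact Or.inl ⟨x, rfl⟩
  | append_singleton Ms P _ =>
      right
      rw [appList_append]
      exact ⟨_, _, rfl⟩

lemma red_appList_inv (x : ℕ) (Ns : List Trm) :
    ∀ (Ms : List Trm) (T : Trm),
      Red (appList (appList (Trm.var x) Ms) Ns) T →
      (∃ H', Red (appList (Trm.var x) Ms) H' ∧ T = appList H' Ns) ∨
      (∃ Ns', LR Ns' Ns ∧ T = appList (appList (Trm.var x) Ms) Ns') := by
  induction Ns using List.reverseRecOn with
  | nil => exact fun Ms T h => Or.inl ⟨T, h, rfl⟩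
  | append_singleton Ns P ih =>
      intro Ms T h
      rw [appList_append] at h
      have shape := appList_var_shape x (Ms ++ Ns)
      rw [appList_append] at shape
      generalize hE : appList (appList (Trm.var x) Ms) Ns = E at h
      cases h with
      | beta y M N =>
          rcases shape with ⟨y', hy⟩ | ⟨A, B, hA⟩ <;> simp_all
      | mu a b M N =>
          rcases shape with ⟨y', hy⟩ | ⟨A, B, hA⟩ <;> simp_all
      | appL N h' =>
          subst hE
          rcases ih Ms _ h' with ⟨H', hred, rfl⟩ | ⟨Ns', hlr, rfl⟩
          · exact Or.inl ⟨H', hred, by rw [appList_append]; rfl⟩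
          · refine Or.inr ⟨Ns' ++ [P], ?_, by rw [appList_append]; rfl⟩
            obtain ⟨pre, a, a', suf, h1, h2, h3⟩ := hlr
            exact ⟨pre, a, a', suf ++ [P], by simp [h1], by simp [h2], h3⟩
      | appR M h' =>
          subst hE
          rename_i N'
          exact Or.inr ⟨Ns ++ [N'], ⟨Ns, P, N', [], rfl, rfl, h'⟩,
            by rw [appList_append]; rfl⟩

lemma red_appList_var_shape {x : ℕ} {Ms : List Trm} {T : Trm}
    (h : Red (appList (Trm.var x) Ms) T) :
    ∃ Ms', T = appList (Trm.var x) Ms' := by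
  rcases red_appList_inv x Ms [] T h with ⟨H', hred, rfl⟩ | ⟨Ns', _, rfl⟩
  · exact absurd hred no_red_var
  · exact ⟨Ns', rfl⟩

lemma acc_cons {P : Trm} (hP : SN P) :
    ∀ {L : List Trm}, Acc LR L → Acc LR (P :: L) := by
  induction hP with
  | intro P _ ihP =>
      intro L hL
      induction hL with
      | intro L hL ihL =>
          refine Acc.intro _ ?_
          rintro L' ⟨pre, a, a', suf, h1, rfl, h3⟩
          cases pre with
          | nil =>
              simp only [List.nil_append] at h1 ⊢
              injection h1 with e1 e2
              subst e1
              exact ihP a' h3 (e2 ▸ Acc.intro L hL)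
          | cons q pre =>
              simp only [List.cons_append] at h1 ⊢
              injection h1 with e1 e2
              subst e1
              exact ihL _ ⟨pre, a, a', suf, e2, rfl, h3⟩

lemma acc_list {L : List Trm} (h : ∀ P ∈ L, SN P) : Acc LR L := by
  induction L with
  | nil =>
      refine Acc.intro _ ?_
      rintro L' ⟨pre, a, a', suf, h1, _, _⟩
      simp at h1
  | cons P L ih =>
      exact acc_cons (h P (by simp)) (ih fun Q hQ => h Q (by simp [hQ]))

lemma sn_appList_aux (x : ℕ) :
    ∀ {H : Trm}, Acc (fun p q => Red q p) H →
    ∀ Ms : List Trm, H = appList (Trm.var x) Ms →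
    ∀ {Ns : List Trm}, Acc LR Ns → SN (appList H Ns) := by
  intro H hH
  induction hH with
  | intro H hH ihH =>
      intro Ms hMs Ns hNs
      induction hNs with
      | intro Ns hNs ihNs =>
          refine Acc.intro _ ?_
          intro T hT
          subst hMs
          rcases red_appList_inv x Ns Ms T hT with
            ⟨H', hred, rfl⟩ | ⟨Ns', hlr, rfl⟩
          · obtain ⟨Ms', rfl⟩ := red_appList_var_shape hred
            exact ihH _ hred Ms' rfl (Acc.intro Ns hNs)
          · exact ihNs Ns' hlr
  
/-- If x M₁…Mₖ is SN and every Nᵢ is SN, then x M₁…Mₖ N₁…Nₘ is SN. -/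
theorem sn_head_application (x : ℕ) (Ms Ns : List Trm)
    (h1 : SN (appList (.var x) Ms)) (h2 : SNs Ns) :
    SN (appList (.var x) (Ms ++ Ns)) := by
  rw [appList_append]
  exact sn_appList_aux x h1 Ms rfl (acc_list h2)
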